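/- Explicit Y-eigenvectors generating the one-parameter family of (2n+1)-dimensional modules: let R be a commutative ring in which q^{1/4} is invertible, set q^{1/2} = (q^{1/4})², t^{1/2} = (q^{1/4})^{−1−2n} for an integer n ≥ 0, and let Y = π∘T be the operator of the polynomial representation for these parameters. Then for each ε ∈ {+1, −1}, the Laurent polynomial P_ε = X^{−n}·∏_{m=−n}^{n}(X + ε·q^{1/4 + m/2}) satisfies Y(P_ε) = q^{−1/4}·P_ε. -/

import Mathlib

/-!
Put `u = q^{1/4}` and `a_m = ε q^{1/4 + m/2}`, so that `a_m a_{-1-m} = 1` and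
`a_m a_{-m} = q^{1/2}`. Both `s` and `π` are algebra maps sending `X` to a multiple `c X⁻¹`, and
`c X⁻¹ + a_m = a_m X⁻¹ (X + c a_m⁻¹)`; hence each of them carries `∏_{m=-n}^{n} (X + a_m)` to a
monomial times a reindexed product of the same shape. With `Q = ∏_{m=-n}^{n-1} (X + a_m)` this gives
`P = X^{-n-1} Q (X² + a_n X)` and `s P = X^{-n-1} Q (a_n X + 1)`, so `s P - P = (1 - X²) X^{-n-1} Q`
and the Demazure–Lusztig formula evaluates to `T P = ε X⁻¹ P`, using `t^{1/2} a_n = ε`.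
Finally `π P = ε q^{1/4} X⁻¹ P` and `π X⁻¹ = q^{-1/2} X`, so `π (T P) = q^{-1/4} P`.
-/

open LaurentPolynomial Finset

namespace LaurentPolynomial

theorem linearMap_ext {R M : Type*} [Semiring R] [AddCommMonoid M] [Module R M]
    {L L' : R[T;T⁻¹] →ₗ[R] M} (h : ∀ n, L (T n) = L' (T n)) : L = L' := by
  refine LinearMap.ext fun f => ?_
  induction f using LaurentPolynomial.induction_on' with
  | add p q hp hq => rw [map_add, map_add, hp, hq]
  | C_mul_T n a => rw [← smul_eq_C_mul, map_smul, map_smul, h]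

variable {R : Type*}

section CommSemiring

variable [CommSemiring R]

noncomputable def scaleInvert (c : Rˣ) : R[T;T⁻¹] →ₐ[R] R[T;T⁻¹] :=
  AddMonoidAlgebra.lift R _ ℤ
    { toFun := fun m => ((c ^ m.toAdd : Rˣ) : R) • T (-m.toAdd)
      map_one' := by simp
      map_mul' := fun a b => by
        simp only [toAdd_mul, zpow_add, Units.val_mul, neg_add, T_add, smul_mul_smul_comm] }

@[simp]
theorem scaleInvert_T (c : Rˣ) (m : ℤ) : scaleInvert c (T m) = ((c ^ m : Rˣ) : R) • T (-m) := by
  rw [scaleInvert, T, AddMonoidAlgebra.lift_single, one_smul]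
  rfl

@[simp]
theorem scaleInvert_C (c : Rˣ) (r : R) : scaleInvert c (C r) = C r := by
  rw [C_eq_algebraMap, AlgHom.commutes]

theorem smul_T_neg_one_add_C {a b c : R} (h : a * b = c) :
    c • T (-1) + C a = C a * T (-1) * (T 1 + C b) := by
  rw [mul_add, mul_assoc, ← T_add, neg_add_cancel, T_zero, smul_eq_C_mul, ← h, map_mul]
  ring

theorem prod_smul_T_neg_one_add_C {ι : Type*} (S : Finset ι) {a b : ι → R} {c : R}
    (h : ∀ i ∈ S, a i * b i = c) :
    ∏ i ∈ S, (c • T (-1) + C (a i)) =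
      C (∏ i ∈ S, a i) * T (-#S) * ∏ i ∈ S, (T 1 + C (b i)) := by
  rw [prod_congr rfl fun i hi => smul_T_neg_one_add_C (h i hi), prod_mul_distrib,
    prod_mul_distrib, prod_const, T_pow, map_prod]
  simp

theorem scaleInvert_T_mul_prod {ι : Type*} (c : Rˣ) (k : ℤ) (S : Finset ι) {a b : ι → R}
    (h : ∀ i ∈ S, a i * b i = c) :
    scaleInvert c (T k * ∏ i ∈ S, (T 1 + C (a i))) =
      C ((c ^ k : Rˣ) * ∏ i ∈ S, a i) * T (-k - #S) * ∏ i ∈ S, (T 1 + C (b i)) := by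
  simp only [map_mul (scaleInvert c), map_prod, map_add, scaleInvert_T, scaleInvert_C, zpow_one]
  rw [prod_smul_T_neg_one_add_C S h, smul_eq_C_mul, map_mul, T_sub]
  ring

end CommSemiring

theorem isRegular_T_two_sub_one [CommRing R] : IsRegular (T 2 - 1 : R[T;T⁻¹]) := by
  have := IsLocalization.map_nonZeroDivisors_le
    (M := Submonoid.powers (Polynomial.X : Polynomial R)) (S := R[T;T⁻¹])
    (Submonoid.mem_map_of_mem _
      (Polynomial.monic_X_pow_sub_C (1 : R) two_ne_zero).mem_nonZeroDivisors)
  exact isRegular_iff_mem_nonZeroDivisors.mpr (by simpa using this)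

end LaurentPolynomial

theorem Int.prod_Icc_sub {M : Type*} [CommMonoid M] (f : ℤ → M) (k a b : ℤ) :
    ∏ m ∈ Icc a b, f (k - m) = ∏ m ∈ Icc (k - b) (k - a), f m :=
  prod_nbij' (k - ·) (k - ·) (by intro m; simp; omega) (by intro m; simp; omega)
    (by intro m _; simp) (by intro m _; simp) (fun _ _ => rfl)

section EigenPoly

variable {R : Type*} [CommRing R] (u : Rˣ) {ε : R}

/-- `ε q^{1/4 + m/2}` when `u = q^{1/4}`. -/
def factorConst (u : Rˣ) (ε : R) (m : ℤ) : R := ε * ((u ^ (1 + 2 * m) : Rˣ) : R)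

noncomputable def factorProd (u : Rˣ) (ε : R) (a b : ℤ) : R[T;T⁻¹] :=
  ∏ m ∈ Icc a b, (T 1 + C (factorConst u ε m))

noncomputable def eigenPoly (u : Rˣ) (ε : R) (n : ℕ) : R[T;T⁻¹] :=
  T (-(n : ℤ)) * factorProd u ε (-n) n

theorem factorConst_mul_factorConst (hε : ε * ε = 1) (m m' : ℤ) :
    factorConst u ε m * factorConst u ε m' = ((u ^ (2 * (1 + m + m')) : Rˣ) : R) := by
  rw [factorConst, factorConst, mul_mul_mul_comm, hε, one_mul, ← Units.val_mul, ← zpow_add]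
  ring_nf

theorem factorConst_mul_factorConst_of_add_eq (hε : ε * ε = 1) {m m' : ℤ} (h : m + m' = -1) :
    factorConst u ε m * factorConst u ε m' = 1 := by
  rw [factorConst_mul_factorConst u hε, add_assoc, h]
  simp

theorem factorConst_mul_factorConst_neg (hε : ε * ε = 1) (m : ℤ) :
    factorConst u ε m * factorConst u ε (-m) = ((u ^ 2 : Rˣ) : R) := by
  rw [factorConst_mul_factorConst u hε]
  simp

theorem prod_factorConst (hε : ε * ε = 1) (n : ℕ) :
    ∏ m ∈ Icc (-(n : ℤ)) n, factorConst u ε m = factorConst u ε n := by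
  induction n with
  | zero => simp
  | succ n ih =>
    have hIcc : Icc (-((n + 1 : ℕ) : ℤ)) (n + 1 : ℕ) =
        insert (-(n : ℤ) - 1) (insert ((n : ℤ) + 1) (Icc (-(n : ℤ)) n)) := by
      ext; simp; omega
    rw [hIcc, prod_insert (by simp; omega), prod_insert (by simp), ih, mul_left_comm,
      factorConst_mul_factorConst_of_add_eq u hε (by ring), mul_one]
    push_cast
    rfl

theorem Int.card_Icc_neg_self (n : ℕ) : (#(Icc (-(n : ℤ)) n) : ℤ) = 2 * n + 1 := by
  simp; omega

theorem eigenPoly_eq_mul (n : ℕ) :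
    eigenPoly u ε n = T (-(n : ℤ) - 1) * factorProd u ε (-n) (n - 1) *
      (T 1 * (T 1 + C (factorConst u ε n))) := by
  rw [eigenPoly, factorProd, ← insert_Icc_sub_one_right_eq_Icc (by omega), prod_insert (by simp),
    show -(n : ℤ) = -n - 1 + 1 by ring, T_add, factorProd]
  ring_nf

theorem scaleInvert_one_eigenPoly (hε : ε * ε = 1) (n : ℕ) :
    scaleInvert 1 (eigenPoly u ε n) = T (-(n : ℤ) - 1) * factorProd u ε (-n) (n - 1) *
      (C (factorConst u ε n) * T 1 + 1) := by
  rw [eigenPoly, factorProd, scaleInvert_T_mul_prod 1 _ _ (b := fun m => factorConst u ε (-1 - m))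
      fun m _ => by simpa using factorConst_mul_factorConst_of_add_eq u hε (by ring),
    one_zpow, Units.val_one, one_mul, prod_factorConst u hε, Int.card_Icc_neg_self,
    Int.prod_Icc_sub (fun m => T 1 + C (factorConst u ε m)), sub_neg_eq_add,
    neg_add_eq_sub, show -1 - (n : ℤ) = -n - 1 by ring, ← insert_Icc_left_eq_Icc_sub_one (by omega),
    prod_insert (by simp), show -(-(n : ℤ)) - (2 * n + 1) = -n - 1 by ring, factorProd]
  have hinv : C (factorConst u ε n) * C (factorConst u ε (-(n : ℤ) - 1)) = 1 := by
    rw [← map_mul, factorConst_mul_factorConst_of_add_eq u hε (by ring), map_one]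
  linear_combination (T (-(n : ℤ) - 1) * ∏ m ∈ Icc (-(n : ℤ)) (n - 1),
    (T 1 + C (factorConst u ε m))) * hinv

theorem scaleInvert_sq_eigenPoly (hε : ε * ε = 1) (n : ℕ) :
    scaleInvert (u ^ 2) (eigenPoly u ε n) = C (ε * u) * T (-1) * eigenPoly u ε n := by
  rw [eigenPoly, factorProd,
    scaleInvert_T_mul_prod (u ^ 2) _ _ (b := fun m => factorConst u ε (0 - m))
      fun m _ => by simpa using factorConst_mul_factorConst_neg u hε m,
    prod_factorConst u hε, Int.card_Icc_neg_self,
    Int.prod_Icc_sub (fun m => T 1 + C (factorConst u ε m)), zero_sub, sub_neg_eq_add, zero_add,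
    show -(-(n : ℤ)) - (2 * n + 1) = -1 + -n by ring, T_add]
  have hc : (((u ^ 2) ^ (-(n : ℤ)) : Rˣ) : R) * factorConst u ε n = ε * u := by
    rw [factorConst, mul_left_comm, ← Units.val_mul, ← zpow_natCast, ← zpow_mul, ← zpow_add]
    ring_nf
    simp
  rw [hc]
  ring

end EigenPoly

section DemazureLusztig

variable {R : Type*} [CommRing R]

theorem demazureLusztig_apply_eq {s TT : R[T;T⁻¹] → R[T;T⁻¹]} {t t' : R}
    (hT : ∀ f, (T 2 - 1) * (TT f - t • s f) = (t - t') • (s f - f)) {f g : R[T;T⁻¹]}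
    (hg : s f - f = (T 2 - 1) * g) : TT f = t • s f + (t - t') • g := by
  rw [← sub_eq_iff_eq_add']
  refine isRegular_T_two_sub_one.left ((hT f).trans ?_)
  rw [hg]
  exact (mul_smul_comm _ _ _).symm

variable (u : Rˣ) {ε : R}

theorem demazureLusztig_eigenPoly (hε : ε * ε = 1) (n : ℕ) {TT : R[T;T⁻¹] → R[T;T⁻¹]}
    (hT : ∀ f, (T 2 - 1) * (TT f - ((u ^ (-(1 + 2 * (n : ℤ))) : Rˣ) : R) • scaleInvert 1 f) =
      (((u ^ (-(1 + 2 * (n : ℤ))) : Rˣ) : R) - ((u ^ (1 + 2 * (n : ℤ)) : Rˣ) : R)) •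
        (scaleInvert 1 f - f)) :
    TT (eigenPoly u ε n) = ε • (T (-1) * eigenPoly u ε n) := by
  set W := T (-(n : ℤ) - 1) * factorProd u ε (-n) (n - 1)
  have hT1 : (T 1 * T 1 : R[T;T⁻¹]) = T 2 := by rw [← T_add]; rfl
  have hg : scaleInvert 1 (eigenPoly u ε n) - eigenPoly u ε n = (T 2 - 1) * -W := by
    rw [scaleInvert_one_eigenPoly u hε, eigenPoly_eq_mul]
    linear_combination (-W) * hT1
  have ht : C ((u ^ (-(1 + 2 * (n : ℤ))) : Rˣ) : R) * C (factorConst u ε n) = C ε := by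
    rw [← map_mul, factorConst, mul_left_comm, ← Units.val_mul, ← zpow_add]
    simp
  have ht' : C ((u ^ (1 + 2 * (n : ℤ)) : Rˣ) : R) = C ε * C (factorConst u ε n) := by
    rw [← map_mul, factorConst, ← mul_assoc, hε, one_mul]
  have hTinv : (T (-1) * T 1 : R[T;T⁻¹]) = 1 := by rw [← T_add]; rfl
  rw [demazureLusztig_apply_eq hT hg, scaleInvert_one_eigenPoly u hε, eigenPoly_eq_mul]
  simp only [smul_eq_C_mul, map_sub]
  linear_combination W * T 1 * ht + W * ht' -
    (C ε * W * (T 1 + C (factorConst u ε n))) * hTinv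

theorem scaleInvert_sq_demazureLusztig_eigenPoly (hε : ε * ε = 1) (n : ℕ)
    {TT : R[T;T⁻¹] → R[T;T⁻¹]}
    (hT : ∀ f, (T 2 - 1) * (TT f - ((u ^ (-(1 + 2 * (n : ℤ))) : Rˣ) : R) • scaleInvert 1 f) =
      (((u ^ (-(1 + 2 * (n : ℤ))) : Rˣ) : R) - ((u ^ (1 + 2 * (n : ℤ)) : Rˣ) : R)) •
        (scaleInvert 1 f - f)) :
    scaleInvert (u ^ 2) (TT (eigenPoly u ε n)) = ((u⁻¹ : Rˣ) : R) • eigenPoly u ε n := by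
  rw [demazureLusztig_eigenPoly u hε n hT, map_smul, map_mul, scaleInvert_T,
    scaleInvert_sq_eigenPoly u hε]
  have hc : C ε * (C (((u ^ 2) ^ (-1 : ℤ) : Rˣ) : R) * C (ε * u)) = C ((u⁻¹ : Rˣ) : R) := by
    have hu : (((u ^ 2) ^ (-1 : ℤ) : Rˣ) : R) * u = ((u⁻¹ : Rˣ) : R) := by
      rw [← Units.val_mul]
      congr 1
      group
    rw [← map_mul, ← map_mul]
    congr 1
    linear_combination (((u ^ 2) ^ (-1 : ℤ) : Rˣ) : R) * u * hε + hu
  have hTinv : (T 1 * T (-1) : R[T;T⁻¹]) = 1 := by rw [← T_add]; rfl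
  simp only [smul_eq_C_mul, neg_neg]
  linear_combination (C ε * C (((u ^ 2) ^ (-1 : ℤ) : Rˣ) : R) * C (ε * u) * eigenPoly u ε n) *
    hTinv + eigenPoly u ε n * hc

end DemazureLusztig

/-- Explicit `Y`-eigenvectors generating the one-parameter family of
`(2n+1)`-dimensional modules: with `q^{1/2} = (q^{1/4})²`,
`t^{1/2} = (q^{1/4})^{−1−2n}`, and `Y = π ∘ T` the operator of the polynomial
representation, for each `ε ∈ {+1, −1}` the Laurent polynomial
`P_ε = X^{−n}·∏_{m=−n}^{n}(X + ε·q^{1/4+m/2})` satisfies `Y(P_ε) = q^{−1/4}·P_ε`.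
Here `s`, `π` are the `R`-linear operators with `s(Xᵐ) = X⁻ᵐ`,
`π(Xᵐ) = q^{m/2}X⁻ᵐ`, and `TT` is the Demazure–Lusztig operator for
`t^{1/2} = (q^{1/4})^{−1−2n}`, encoded by `hT`. -/
theorem stmt3 (R : Type*) [CommRing R] (q4 : Rˣ) (n : ℕ)
    (s π TT : Module.End R (LaurentPolynomial R))
    (hs : ∀ m : ℤ, s (T m) = T (-m))
    (hπ : ∀ m : ℤ, π (T m) = (((q4 ^ 2) ^ m : Rˣ) : R) • T (-m))
    (hT : ∀ f : LaurentPolynomial R,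
      (T 2 - 1) * (TT f - ((q4 ^ (-(1 + 2 * (n : ℤ))) : Rˣ) : R) • s f) =
        (((q4 ^ (-(1 + 2 * (n : ℤ))) : Rˣ) : R) -
          ((q4 ^ (1 + 2 * (n : ℤ)) : Rˣ) : R)) • (s f - f)) :
    ∀ ε : R, ε = 1 ∨ ε = -1 →
      π (TT (T (-(n : ℤ)) *
          ∏ m ∈ Finset.Icc (-(n : ℤ)) (n : ℤ),
            (T 1 + C (ε * ((q4 ^ (1 + 2 * m) : Rˣ) : R))))) =
        ((q4⁻¹ : Rˣ) : R) • (T (-(n : ℤ)) *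
          ∏ m ∈ Finset.Icc (-(n : ℤ)) (n : ℤ),
            (T 1 + C (ε * ((q4 ^ (1 + 2 * m) : Rˣ) : R)))) := by
  intro ε hε
  have hεε : ε * ε = 1 := by rcases hε with rfl | rfl <;> norm_num
  obtain rfl : s = (scaleInvert 1).toLinearMap := linearMap_ext fun m => by simp [hs]
  obtain rfl : π = (scaleInvert (q4 ^ 2)).toLinearMap := linearMap_ext fun m => by simp [hπ]
  exact scaleInvert_sq_demazureLusztig_eigenPoly q4 hεε n hT
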